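/- arXiv:1503.01803 — 2 statements merged into one kernel-verified Lean document; each statement's English description precedes it below -/
import Mathlib

section
/- Let X and Y be topological spaces, let π : X → Y be a continuous map, and let C ⊆ X. Suppose (U_i)_{i ∈ ℕ} is a countable family of open subsets of X such that X \ C ⊆ ⋃_i U_i, such that the closure of each U_i is disjoint from C, and such that for each i the restriction of π to the closure of U_i is a homeomorphism onto a closed subset of Y. Suppose moreover that π(C) is meager in Y. Then for every closed subset S of X with S \ C nowhere dense in X, the image π(S) is meager in Y. -/
open Set

lemma my_isMeagre_of_isNowhereDense {X : Type*} [TopologicalSpace X] {s : Set X}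
    (h : IsNowhereDense s) : IsMeagre s := by
  rw [isMeagre_iff_countable_union_isNowhereDense]
  exact ⟨{closure s}, by simpa using h.closure, countable_singleton _,
    by simpa using subset_closure⟩

lemma my_isMeagre_union {X : Type*} [TopologicalSpace X] {s t : Set X}
    (hs : IsMeagre s) (ht : IsMeagre t) : IsMeagre (s ∪ t) := by
  rw [IsMeagre, compl_union]
  exact Filter.inter_mem hs ht

/-- If `π : X → Y` is continuous, `(U i)` is a countable family of open sets covering the
complement of `C`, the closure of each `U i` is disjoint from `C` and `π` restricted to the
closure of each `U i` is a homeomorphism onto a closed subset of `Y`, and `π(C)` is meager,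
then the image of any closed set `S` with `S \ C` nowhere dense is meager in `Y`. -/
theorem meagre_image_of_closed_of_nowhereDense
    {X Y : Type*} [TopologicalSpace X] [TopologicalSpace Y]
    (π : X → Y) (hπ : Continuous π) (C : Set X) (U : ℕ → Set X)
    (hUopen : ∀ i, IsOpen (U i))
    (hcover : Cᶜ ⊆ ⋃ i, U i)
    (hdisj : ∀ i, Disjoint (closure (U i)) C)
    (hhomeo : ∀ i, Topology.IsClosedEmbedding (fun x : closure (U i) => π x))
    (hCmeagre : IsMeagre (π '' C)) :
    ∀ S : Set X, IsClosed S → IsNowhereDense (S \ C) → IsMeagre (π '' S) := by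
  intro S hS hND
  set T := closure (S \ C) with hT
  set A : ℕ → Set X := fun i => T ∩ closure (U i) with hA
  -- each π '' A i is closed and nowhere dense
  have key : ∀ i, IsNowhereDense (π '' A i) := by
    intro i
    have hclosedemb := hhomeo i
    -- π '' A i is closed
    have hAclosed : IsClosed (π '' A i) := by
      have : π '' A i = (fun x : closure (U i) => π x) ''
          (Subtype.val ⁻¹' T) := by
        ext y
        constructor
        · rintro ⟨x, ⟨hxT, hxU⟩, rfl⟩
          exact ⟨⟨x, hxU⟩, hxT, rfl⟩
        · rintro ⟨⟨x, hxU⟩, hxT, rfl⟩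
          exact ⟨x, ⟨hxT, hxU⟩, rfl⟩
      rw [this]
      exact hclosedemb.isClosedMap _ (isClosed_closure.preimage continuous_subtype_val)
    -- interior empty
    rw [IsNowhereDense, hAclosed.closure_eq]
    by_contra hne
    obtain ⟨y, hy⟩ := Set.nonempty_iff_ne_empty.mpr hne
    -- pull back the interior
    have hWopen : IsOpen (interior (π '' A i)) := isOpen_interior
    have hV : IsOpen ((fun x : closure (U i) => π x) ⁻¹' interior (π '' A i)) :=
      hclosedemb.continuous.isOpen_preimage _ hWopen
    obtain ⟨O, hOopen, hOeq⟩ := isOpen_induced_iff.mp hV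
    -- O meets closure (U i)
    obtain ⟨x, ⟨hxT, hxU⟩, hπx⟩ := interior_subset hy
    have hxV : (⟨x, hxU⟩ : closure (U i)) ∈
        (fun x : closure (U i) => π x) ⁻¹' interior (π '' A i) := by
      simpa [hπx] using hy
    have hxO : x ∈ O := by
      rw [← hOeq] at hxV; exact hxV
    -- O ∩ closure (U i) ⊆ T
    have hsub : O ∩ closure (U i) ⊆ T := by
      rintro z ⟨hzO, hzU⟩
      have hzV : (⟨z, hzU⟩ : closure (U i)) ∈
          (fun x : closure (U i) => π x) ⁻¹' interior (π '' A i) := by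
        rw [← hOeq]; exact hzO
      have hzW : π z ∈ π '' A i := interior_subset hzV
      obtain ⟨a, ⟨haT, haU⟩, ha⟩ := hzW
      have : (⟨a, haU⟩ : closure (U i)) = ⟨z, hzU⟩ :=
        hclosedemb.injective (by simpa using ha)
      have : a = z := congrArg Subtype.val this
      rwa [← this]
    -- O ∩ U i is nonempty open inside T
    have hmem : x ∈ closure (U i) := hxU
    have : (O ∩ U i).Nonempty := by
      rcases mem_closure_iff.mp hmem O hOopen hxO with ⟨z, hz⟩
      exact ⟨z, hz⟩
    obtain ⟨z, hzO, hzU⟩ := this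
    have hzint : z ∈ interior T :=
      mem_interior.mpr ⟨O ∩ U i, fun w hw => hsub ⟨hw.1, subset_closure hw.2⟩,
        hOopen.inter (hUopen i), ⟨hzO, hzU⟩⟩
    have : interior T = ∅ := by
      have := hND.closure
      rwa [IsNowhereDense, closure_closure] at this
    rw [this] at hzint
    exact hzint
  -- covering of π '' S
  have hcov : π '' S ⊆ (π '' C) ∪ ⋃ i, π '' A i := by
    rintro y ⟨x, hxS, rfl⟩
    by_cases hxC : x ∈ C
    · exact Or.inl ⟨x, hxC, rfl⟩
    · obtain ⟨i, hi⟩ := mem_iUnion.mp (hcover hxC)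
      exact Or.inr (mem_iUnion.mpr ⟨i, ⟨x, ⟨subset_closure ⟨hxS, hxC⟩,
        subset_closure hi⟩, rfl⟩⟩)
  exact (my_isMeagre_union hCmeagre
    (isMeagre_iUnion fun i => my_isMeagre_of_isNowhereDense (key i))).mono hcov
end

section
/- Let X and Y be topological spaces, let π : X → Y be continuous, and let U be an open subset of X such that the restriction of π to the closure of U is a homeomorphism onto a closed subset of Y. If S is a closed subset of X with S ⊆ closure(U) and S is nowhere dense in X, then π(S) is a closed, nowhere dense subset of Y. -/
/-- If `π : X → Y` is continuous, `U ⊆ X` is open, and `π` restricted to the closure of `U`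
is a homeomorphism onto a closed subset of `Y`, then for every closed, nowhere dense set
`S ⊆ closure U`, the image `π(S)` is closed and nowhere dense in `Y`. -/
theorem isClosed_isNowhereDense_image
    {X Y : Type*} [TopologicalSpace X] [TopologicalSpace Y]
    (π : X → Y) (hπ : Continuous π) (U : Set X) (hU : IsOpen U)
    (hhomeo : Topology.IsClosedEmbedding (fun x : closure U => π x))
    (S : Set X) (hSclosed : IsClosed S) (hSU : S ⊆ closure U)
    (hSnd : IsNowhereDense S) :
    IsClosed (π '' S) ∧ IsNowhereDense (π '' S) := by
  set f : closure U → Y := fun x : closure U => π x with hf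
  have hfS : π '' S = f '' (Subtype.val ⁻¹' S) := by
    ext y
    constructor
    · rintro ⟨x, hx, rfl⟩
      exact ⟨⟨x, hSU hx⟩, hx, rfl⟩
    · rintro ⟨⟨x, hxU⟩, hx, rfl⟩
      exact ⟨x, hx, rfl⟩
  have hintS : interior S = ∅ := by
    have := hSnd
    rwa [IsNowhereDense, hSclosed.closure_eq] at this
  have hclosed : IsClosed (π '' S) := by
    rw [hfS]
    exact hhomeo.isClosedMap _ (hSclosed.preimage continuous_subtype_val)
  refine ⟨hclosed, ?_⟩
  rw [hclosed.isNowhereDense_iff, Set.eq_empty_iff_forall_notMem]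
  intro y hy
  obtain ⟨V, hVsub, hVopen, hyV⟩ := mem_interior.mp hy
  obtain ⟨s, hsS, rfl⟩ := hVsub hyV
  have hsU : s ∈ closure U := hSU hsS
  -- f ⁻¹' V is open in the subtype
  have hpre : IsOpen (f ⁻¹' V) := hVopen.preimage hhomeo.continuous
  obtain ⟨O, hOopen, hOeq⟩ := isOpen_induced_iff.mp hpre
  have hsO : s ∈ O := by
    have : (⟨s, hsU⟩ : closure U) ∈ f ⁻¹' V := hyV
    rw [← hOeq] at this
    exact this
  -- O ∩ U is nonempty
  obtain ⟨x, hxO, hxU⟩ := mem_closure_iff.mp hsU O hOopen hsO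
  -- O ∩ U ⊆ S
  have hsub : O ∩ U ⊆ S := by
    rintro z ⟨hzO, hzU⟩
    have hzcl : z ∈ closure U := subset_closure hzU
    have hzV : f ⟨z, hzcl⟩ ∈ V := by
      have : (⟨z, hzcl⟩ : closure U) ∈ Subtype.val ⁻¹' O := hzO
      rw [hOeq] at this
      exact this
    obtain ⟨s', hs'S, hs'eq⟩ := hVsub hzV
    have : f ⟨s', hSU hs'S⟩ = f ⟨z, hzcl⟩ := hs'eq
    have := hhomeo.injective this
    rw [Subtype.mk_eq_mk] at this
    rwa [← this]
  have : x ∈ interior S := interior_mono hsub (((hOopen.inter hU).subset_interior_iff.mpr le_rfl) ⟨hxO, hxU⟩)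
  rw [hintS] at this
  exact this
end
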